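/- Let Q = (q_n) be a basic sequence and suppose x = E_0.E_1E_2… w.r.t. Q is Q-distribution normal. If y = F_0.F_1F_2… w.r.t. Q satisfies lim_{N→∞} (1/N) ∑_{n=1}^N (|E_n − F_n| + 1)/q_n = 0, then y is Q-distribution normal. -/

import Mathlib

open Filter Finset MeasureTheory

noncomputable section
open scoped Classical

/-- `cantorProd q n = q 1 * q 2 * ... * q n` (empty product for `n = 0`). -/
def cantorProd (q : ℕ → ℕ) (n : ℕ) : ℕ := ∏ j ∈ Finset.Icc 1 n, q j

/-- `T_{Q,n}(x) = q_1 q_2 ⋯ q_n · x (mod 1)`. -/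
def TQ (q : ℕ → ℕ) (n : ℕ) (x : ℝ) : ℝ := Int.fract ((cantorProd q n : ℝ) * x)

/-- A basic sequence: `q n ≥ 2` for all `n ≥ 1`. -/
def BasicSeq (q : ℕ → ℕ) : Prop := ∀ n, 1 ≤ n → 2 ≤ q n

/-- `Q` is infinite in limit: `q n → ∞`. -/
def InfiniteInLimit (q : ℕ → ℕ) : Prop := Filter.Tendsto q Filter.atTop Filter.atTop

/-- `E` (indexed from 1) is the sequence of digits of the `Q`-Cantor series expansion of `x`:
`E n ∈ {0, …, q n − 1}`, `E n ≠ q n − 1` infinitely often, and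
`x = ⌊x⌋ + ∑_{n ≥ 1} E n / (q 1 ⋯ q n)`. -/
def IsCantorDigits (q : ℕ → ℕ) (E : ℕ → ℕ) (x : ℝ) : Prop :=
  (∀ n, 1 ≤ n → E n < q n) ∧
  {n | 1 ≤ n ∧ E n ≠ q n - 1}.Infinite ∧
  x = (⌊x⌋ : ℝ) + ∑' n : ℕ, (E (n + 1) : ℝ) / (cantorProd q (n + 1) : ℝ)

/-- `Q_n^{(k)} = ∑_{j=1}^n 1/(q_j q_{j+1} ⋯ q_{j+k-1})`. -/
def Qnk (q : ℕ → ℕ) (k n : ℕ) : ℝ :=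
  ∑ j ∈ Finset.Icc 1 n, 1 / ∏ i ∈ Finset.Ico j (j + k), (q i : ℝ)

/-- `Q` is `k`-divergent. -/
def KDivergent (q : ℕ → ℕ) (k : ℕ) : Prop :=
  Filter.Tendsto (fun n => Qnk q k n) Filter.atTop Filter.atTop

/-- `N_n^Q(B, x)`: the number of indices `1 ≤ i ≤ n - |B| + 1` at which the block `B`
occurs in the digit sequence `E`. -/
def blockCount (E : ℕ → ℕ) (B : List ℕ) (n : ℕ) : ℕ :=
  ((Finset.Icc 1 (n + 1 - B.length)).filter
    (fun i => ∀ t, t < B.length → E (i + t) = B.getD t 0)).card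

/-- The digit sequence `E` is `Q`-normal of order `k`. -/
def QNormalOfOrder (q : ℕ → ℕ) (E : ℕ → ℕ) (k : ℕ) : Prop :=
  ∀ B : List ℕ, B.length = k →
    Filter.Tendsto (fun n => (blockCount E B n : ℝ) / Qnk q k n) Filter.atTop (nhds 1)

/-- A sequence (indexed from 0) is uniformly distributed mod 1. -/
def UDMod1 (z : ℕ → ℝ) : Prop :=
  ∀ a b : ℝ, 0 ≤ a → a < b → b ≤ 1 →
    Filter.Tendsto
      (fun N => (((Finset.range N).filter (fun n => Int.fract (z n) ∈ Set.Ico a b)).card : ℝ) / N)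
      Filter.atTop (nhds (b - a))

/-- `x` is `Q`-distribution normal: `(T_{Q,n}(x))_{n ≥ 0}` is uniformly distributed mod 1. -/
def QDistNormal (q : ℕ → ℕ) (x : ℝ) : Prop := UDMod1 (fun n => TQ q n x)

/-- A set of natural numbers has (natural) density zero. -/
def DensityZero (A : Set ℕ) : Prop :=
  Filter.Tendsto (fun N => (((Finset.Icc 1 N).filter (fun n => n ∈ A)).card : ℝ) / N)
    Filter.atTop (nhds 0)

/-- The `n`-th digit (for `n ≥ 1`) of the `Q`-Cantor series expansion of `x`,
extracted via `E_n = ⌊q_n · T_{Q,n-1}(x)⌋`. -/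
def cantorDigit (q : ℕ → ℕ) (x : ℝ) (n : ℕ) : ℤ := ⌊(q n : ℝ) * TQ q (n - 1) x⌋

/-- `ψ_{P,Q}(x) = ∑_{n ≥ 1} min(E_n, q_n − 1)/(q_1 ⋯ q_n)`, where `E` are the `P`-digits of `x`. -/
def psiMap (p q : ℕ → ℕ) (x : ℝ) : ℝ :=
  ∑' n : ℕ, ((min (cantorDigit p x (n + 1)) ((q (n + 1) : ℤ) - 1) : ℤ) : ℝ) /
    (cantorProd q (n + 1) : ℝ)

/-- `N_n^Q(B, x)` defined via the canonical digits of the real number `x`. -/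
def blockCountReal (q : ℕ → ℕ) (x : ℝ) (B : List ℕ) (n : ℕ) : ℕ :=
  ((Finset.Icc 1 (n + 1 - B.length)).filter
    (fun i => ∀ t, t < B.length → cantorDigit q x (i + t) = (B.getD t 0 : ℤ))).card

/-- The real number `x` is `Q`-normal of order `k`. -/
def QNormalOfOrderReal (q : ℕ → ℕ) (x : ℝ) (k : ℕ) : Prop :=
  ∀ B : List ℕ, B.length = k →
    Filter.Tendsto (fun n => (blockCountReal q x B n : ℝ) / Qnk q k n) Filter.atTop (nhds 1)

/-- The discrepancy `D_N` of the finite sequence `x 1, …, x N` (of numbers in `[0,1)`). -/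
def discrepancy (N : ℕ) (x : ℕ → ℝ) : ℝ :=
  sSup {d : ℝ | ∃ a b : ℝ, 0 ≤ a ∧ a ≤ b ∧ b ≤ 1 ∧
    d = |(((Finset.Icc 1 N).filter (fun n => x n ∈ Set.Ico a b)).card : ℝ) / N - (b - a)|}

/-!
Write `P n = q 1 ⋯ q n`. Up to an integer, `P n * x` equals `P n` times the tail
`∑_{m > n} E m / P m` of the Cantor series, and this lies between `E (n+1) / q (n+1)` and
`(E (n+1) + 1) / q (n+1)`. Hence `T_{Q,n}(y)` is congruent mod 1 to `T_{Q,n}(x) + r n` with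
`|r n| ≤ (|E (n+1) - F (n+1)| + 1) / q (n+1)`. The hypothesis says these bounds have Cesàro
mean tending to `0`, so by Markov's inequality `|r n| ≥ ε` only on a set of density zero, and a
perturbation that is small off a set of density zero preserves uniform distribution mod 1.
-/

open scoped Topology

theorem sum_range_le_of_le_sub_succ {f g : ℕ → ℝ} (hg : ∀ n, 0 ≤ g n)
    (hfg : ∀ n, f n ≤ g n - g (n + 1)) (N : ℕ) : ∑ n ∈ range N, f n ≤ g 0 :=
  calc ∑ n ∈ range N, f n ≤ ∑ n ∈ range N, (g n - g (n + 1)) := sum_le_sum fun n _ => hfg n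
    _ = g 0 - g N := sum_range_sub' g N
    _ ≤ g 0 := sub_le_self _ (hg N)

theorem sum_Icc_one_eq_sum_range {M : Type*} [AddCommMonoid M] (f : ℕ → M) (N : ℕ) :
    ∑ n ∈ Icc 1 N, f n = ∑ n ∈ range N, f (n + 1) := by
  rw [range_eq_Ico, sum_Ico_add' f 0 N 1]
  rfl

theorem tendsto_card_le_div_of_cesaro {d : ℕ → ℝ} (hd : ∀ n, 0 ≤ d n)
    (h : Tendsto (fun N => (∑ n ∈ range N, d n) / N) atTop (𝓝 0)) {ε : ℝ} (hε : 0 < ε) :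
    Tendsto (fun N => (#{n ∈ range N | ε ≤ d n} : ℝ) / N) atTop (𝓝 0) := by
  have hmarkov (N : ℕ) : ε * #{n ∈ range N | ε ≤ d n} ≤ ∑ n ∈ range N, d n :=
    calc ε * #{n ∈ range N | ε ≤ d n}
        = #{n ∈ range N | ε ≤ d n} • ε := by rw [nsmul_eq_mul, mul_comm]
      _ ≤ ∑ n ∈ range N with ε ≤ d n, d n :=
        card_nsmul_le_sum _ _ _ fun n hn => (mem_filter.mp hn).2
      _ ≤ ∑ n ∈ range N, d n := sum_le_sum_of_subset_of_nonneg (filter_subset _ _) fun n _ _ => hd n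
  refine squeeze_zero (fun N => by positivity) (fun N => ?_) (by simpa using h.const_mul ε⁻¹)
  calc (#{n ∈ range N | ε ≤ d n} : ℝ) / N = ε⁻¹ * (ε * #{n ∈ range N | ε ≤ d n} / N) := by
        field_simp
    _ ≤ ε⁻¹ * ((∑ n ∈ range N, d n) / N) := by gcongr; exact hmarkov N

section Equidistribution

variable {u r z w : ℕ → ℝ}

def fractCount (z : ℕ → ℝ) (a b : ℝ) (N : ℕ) : ℕ :=
  #{n ∈ range N | Int.fract (z n) ∈ Set.Ico a b}

theorem fractCount_add {a b c : ℝ} (hab : a ≤ b) (hbc : b ≤ c) (N : ℕ) :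
    fractCount z a b N + fractCount z b c N = fractCount z a c N := by
  rw [fractCount, fractCount, ← card_union_of_disjoint, filter_union_right, fractCount]
  · simp_rw [← Set.mem_union, Set.Ico_union_Ico_eq_Ico hab hbc]
  · exact disjoint_filter.mpr fun n _ h₁ h₂ => (not_lt.mpr h₂.1) h₁.2

theorem fractCount_zero_one (N : ℕ) : fractCount z 0 1 N = N := by
  rw [fractCount, filter_true_of_mem fun n _ => ⟨Int.fract_nonneg _, Int.fract_lt_one _⟩,
    card_range]

theorem UDMod1.congr_fract (hz : UDMod1 z) (h : ∀ n, Int.fract (z n) = Int.fract (w n)) :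
    UDMod1 w := by
  intro a b ha hab hb
  simpa only [h] using hz a b ha hab hb

/-- For uniform distribution mod 1 the lower bounds suffice: the upper bound on `[a, b)` is the
lower bound on its complement `[0, a) ∪ [b, 1)`. -/
theorem UDMod1.of_eventually_le
    (h : ∀ a b, 0 ≤ a → a ≤ b → b ≤ 1 → ∀ δ > 0,
      ∀ᶠ N in atTop, b - a - δ ≤ (fractCount z a b N : ℝ) / N) :
    UDMod1 z := by
  intro a b ha hab hb
  refine tendsto_order.mpr ⟨fun c hc => ?_, fun c hc => ?_⟩
  · filter_upwards [h a b ha hab.le hb ((b - a - c) / 2) (by linarith)] with N hN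
    exact lt_of_lt_of_le (by linarith) hN
  · have hδ : 0 < (c - (b - a)) / 3 := by linarith
    filter_upwards [h 0 a le_rfl ha (hab.le.trans hb) _ hδ, h b 1 (ha.trans hab.le) hb le_rfl _ hδ,
      eventually_gt_atTop 0] with N hlow hhigh hN
    have hsum : fractCount z 0 a N + fractCount z a b N + fractCount z b 1 N = N := by
      rw [fractCount_add ha hab.le, fractCount_add (ha.trans hab.le) hb, fractCount_zero_one]
    have hsum' : (fractCount z 0 a N : ℝ) + fractCount z a b N + fractCount z b 1 N = N := by
      exact_mod_cast hsum
    have hN' : (0 : ℝ) < N := by exact_mod_cast hN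
    have hsplit : (fractCount z a b N : ℝ) / N
        = 1 - (fractCount z 0 a N : ℝ) / N - (fractCount z b 1 N : ℝ) / N := by
      field_simp
      linarith
    change (fractCount z a b N : ℝ) / N < c
    rw [hsplit]
    linarith

theorem fract_add_mem_Ico {u r a b ε : ℝ} (ha : 0 ≤ a) (hb : b ≤ 1)
    (hu : Int.fract u ∈ Set.Ico (a + ε) (b - ε)) (hr : |r| < ε) :
    Int.fract (u + r) ∈ Set.Ico a b := by
  obtain ⟨hr₁, hr₂⟩ := abs_lt.mp hr
  have hmem : Int.fract u + r ∈ Set.Ico a b := ⟨by linarith [hu.1], by linarith [hu.2]⟩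
  have hfract : Int.fract (u + r) = Int.fract (Int.fract u + r) :=
    Int.fract_eq_fract.mpr ⟨⌊u⌋, by rw [← Int.self_sub_floor]; ring⟩
  rwa [hfract, Int.fract_eq_self.mpr ⟨ha.trans hmem.1, hmem.2.trans_le hb⟩]

theorem eventually_le_fractCount_add (hu : UDMod1 u)
    (hr : ∀ ε > 0, Tendsto (fun N => (#{n ∈ range N | ε ≤ |r n|} : ℝ) / N) atTop (𝓝 0))
    {a b δ : ℝ} (ha : 0 ≤ a) (hb : b ≤ 1) (hδ : 0 < δ) :
    ∀ᶠ N in atTop, b - a - δ ≤ (fractCount (fun n => u n + r n) a b N : ℝ) / N := by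
  rcases le_or_gt (b - a) δ with hsmall | hlarge
  · exact Eventually.of_forall fun N => by
      have : (0 : ℝ) ≤ (fractCount (fun n => u n + r n) a b N : ℝ) / N := by positivity
      linarith
  set ε := δ / 4 with hεδ
  have hε : 0 < ε := by positivity
  have hU := hu (a + ε) (b - ε) (by linarith) (by linarith) (by linarith)
  have hgap : b - a - 3 * ε < b - ε - (a + ε) := by linarith
  filter_upwards [hU.eventually (eventually_gt_nhds hgap),
    (hr ε hε).eventually (eventually_lt_nhds hε)] with N hgood hbad
  have hcount : fractCount u (a + ε) (b - ε) N
      ≤ fractCount (fun n => u n + r n) a b N + #{n ∈ range N | ε ≤ |r n|} := by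
    refine (card_le_card fun n hn => ?_).trans (card_union_le _ _)
    obtain ⟨hn, hmem⟩ := mem_filter.mp hn
    by_cases hrn : ε ≤ |r n|
    · exact mem_union_right _ (mem_filter.mpr ⟨hn, hrn⟩)
    · exact mem_union_left _ (mem_filter.mpr ⟨hn, fract_add_mem_Ico ha hb hmem (not_le.mp hrn)⟩)
  have hcount' : (fractCount u (a + ε) (b - ε) N : ℝ) / N
      ≤ (fractCount (fun n => u n + r n) a b N : ℝ) / N + (#{n ∈ range N | ε ≤ |r n|} : ℝ) / N := by
    rw [← add_div]
    gcongr
    exact_mod_cast hcount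
  change b - a - 3 * ε < (fractCount u (a + ε) (b - ε) N : ℝ) / N at hgood
  linarith

theorem UDMod1.add_of_density (hu : UDMod1 u)
    (hr : ∀ ε > 0, Tendsto (fun N => (#{n ∈ range N | ε ≤ |r n|} : ℝ) / N) atTop (𝓝 0)) :
    UDMod1 fun n => u n + r n :=
  UDMod1.of_eventually_le fun _ _ ha _ hb _ hδ => eventually_le_fractCount_add hu hr ha hb hδ

end Equidistribution

section CantorSeries

variable {q E F : ℕ → ℕ} {x y : ℝ}

theorem cantorProd_succ (q : ℕ → ℕ) (n : ℕ) :
    cantorProd q (n + 1) = cantorProd q n * q (n + 1) :=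
  prod_Icc_succ_top (Nat.le_add_left 1 n) q

theorem cantorProd_pos (hq : ∀ n, 1 ≤ n → 0 < q n) (n : ℕ) : (0 : ℝ) < cantorProd q n := by
  exact_mod_cast prod_pos fun j hj => hq j (mem_Icc.mp hj).1

theorem digit_div_cantorProd_le_sub (hE : ∀ n, 1 ≤ n → E n < q n) (n : ℕ) :
    (E (n + 1) : ℝ) / cantorProd q (n + 1) ≤ 1 / cantorProd q n - 1 / cantorProd q (n + 1) := by
  have hP := cantorProd_pos (fun k hk => Nat.zero_lt_of_lt (hE k hk)) n
  have hEq : (E (n + 1) : ℝ) + 1 ≤ q (n + 1) := by exact_mod_cast hE (n + 1) (Nat.le_add_left 1 n)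
  have hq : (0 : ℝ) < q (n + 1) := by linarith [(E (n + 1)).cast_nonneg (α := ℝ)]
  rw [cantorProd_succ, Nat.cast_mul, div_le_iff₀ (by positivity)]
  field_simp
  linarith

def cantorTail (q E : ℕ → ℕ) (n : ℕ) : ℝ :=
  ∑' m, (E (n + m + 1) : ℝ) / cantorProd q (n + m + 1)

theorem sum_range_digit_div_cantorProd_le (hE : ∀ n, 1 ≤ n → E n < q n) (n N : ℕ) :
    ∑ m ∈ range N, (E (n + m + 1) : ℝ) / cantorProd q (n + m + 1) ≤ 1 / cantorProd q n :=
  sum_range_le_of_le_sub_succ (g := fun m => 1 / (cantorProd q (n + m) : ℝ))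
    (fun _ => by positivity) (fun m => digit_div_cantorProd_le_sub hE (n + m)) N

theorem summable_cantorTail (hE : ∀ n, 1 ≤ n → E n < q n) (n : ℕ) :
    Summable fun m => (E (n + m + 1) : ℝ) / cantorProd q (n + m + 1) :=
  summable_of_sum_range_le (fun _ => by positivity) (sum_range_digit_div_cantorProd_le hE n)

theorem cantorTail_nonneg (n : ℕ) : 0 ≤ cantorTail q E n :=
  tsum_nonneg fun _ => by positivity

theorem cantorTail_le (hE : ∀ n, 1 ≤ n → E n < q n) (n : ℕ) :
    cantorTail q E n ≤ 1 / cantorProd q n :=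
  Real.tsum_le_of_sum_range_le (fun _ => by positivity) (sum_range_digit_div_cantorProd_le hE n)

theorem cantorTail_eq_add (hE : ∀ n, 1 ≤ n → E n < q n) (n : ℕ) :
    cantorTail q E n = E (n + 1) / cantorProd q (n + 1) + cantorTail q E (n + 1) := by
  rw [cantorTail, (summable_cantorTail hE n).tsum_eq_zero_add, cantorTail]
  congr 1
  exact tsum_congr fun m => by rw [show n + (m + 1) + 1 = n + 1 + m + 1 by omega]

theorem cantorProd_mul_cantorTail_mem (hE : ∀ n, 1 ≤ n → E n < q n) (n : ℕ) :
    cantorProd q n * cantorTail q E n ∈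
      Set.Icc ((E (n + 1) : ℝ) / q (n + 1)) ((E (n + 1) + 1) / q (n + 1)) := by
  have hP := cantorProd_pos (fun k hk => Nat.zero_lt_of_lt (hE k hk)) n
  have hq : (0 : ℝ) < q (n + 1) := by
    exact_mod_cast Nat.zero_lt_of_lt (hE (n + 1) (Nat.le_add_left 1 n))
  have hsplit : cantorProd q n * cantorTail q E n
      = E (n + 1) / q (n + 1) + cantorProd q n * cantorTail q E (n + 1) := by
    rw [cantorTail_eq_add hE, cantorProd_succ, Nat.cast_mul]
    field_simp
  have hrest : cantorProd q n * cantorTail q E (n + 1) ≤ 1 / q (n + 1) :=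
    calc cantorProd q n * cantorTail q E (n + 1)
        ≤ cantorProd q n * (1 / cantorProd q (n + 1)) := by gcongr; exact cantorTail_le hE _
      _ = 1 / q (n + 1) := by rw [cantorProd_succ, Nat.cast_mul]; field_simp
  rw [hsplit, add_div]
  exact ⟨le_add_of_nonneg_right (mul_nonneg hP.le (cantorTail_nonneg _)), by gcongr⟩

theorem exists_int_cantorProd_mul_eq (hE : IsCantorDigits q E x) (n : ℕ) :
    ∃ j : ℤ, cantorProd q n * x = j + cantorProd q n * cantorTail q E n := by
  induction n with
  | zero =>
    refine ⟨⌊x⌋, ?_⟩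
    have hP : cantorProd q 0 = 1 := prod_empty
    simp only [cantorTail, hP, Nat.cast_one, one_mul, zero_add]
    exact hE.2.2
  | succ n ih =>
    obtain ⟨j, hj⟩ := ih
    refine ⟨q (n + 1) * j + E (n + 1), ?_⟩
    have hP := cantorProd_pos (fun k hk => Nat.zero_lt_of_lt (hE.1 k hk)) n
    have hq : (q (n + 1) : ℝ) ≠ 0 := by
      exact_mod_cast (Nat.zero_lt_of_lt (hE.1 (n + 1) (Nat.le_add_left 1 n))).ne'
    rw [cantorTail_eq_add hE.1, cantorProd_succ, Nat.cast_mul] at hj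
    rw [cantorProd_succ]
    push_cast
    field_simp at hj ⊢
    linear_combination hj

theorem abs_sub_cantorProd_mul_cantorTail_le (hE : ∀ n, 1 ≤ n → E n < q n)
    (hF : ∀ n, 1 ≤ n → F n < q n) (n : ℕ) :
    |cantorProd q n * cantorTail q F n - cantorProd q n * cantorTail q E n|
      ≤ (|(E (n + 1) : ℝ) - F (n + 1)| + 1) / q (n + 1) := by
  obtain ⟨hE₁, hE₂⟩ := cantorProd_mul_cantorTail_mem hE n
  obtain ⟨hF₁, hF₂⟩ := cantorProd_mul_cantorTail_mem hF n
  have hdiff : |(E (n + 1) : ℝ) / q (n + 1) - F (n + 1) / q (n + 1)|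
      = |(E (n + 1) : ℝ) - F (n + 1)| / q (n + 1) := by
    rw [← sub_div, abs_div, Nat.abs_cast]
  rw [add_div] at hE₂ hF₂ ⊢
  rw [abs_sub_le_iff, ← hdiff]
  constructor <;> linarith [le_abs_self ((E (n + 1) : ℝ) / q (n + 1) - F (n + 1) / q (n + 1)),
    neg_abs_le ((E (n + 1) : ℝ) / q (n + 1) - F (n + 1) / q (n + 1))]

theorem fract_TQ_add_sub_eq_fract_TQ (hE : IsCantorDigits q E x)
    (hF : IsCantorDigits q F y) (n : ℕ) :
    Int.fract (TQ q n x + (cantorProd q n * cantorTail q F n - cantorProd q n * cantorTail q E n))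
      = Int.fract (TQ q n y) := by
  obtain ⟨j, hj⟩ := exists_int_cantorProd_mul_eq hE n
  obtain ⟨k, hk⟩ := exists_int_cantorProd_mul_eq hF n
  refine Int.fract_eq_fract.mpr
    ⟨j - ⌊(cantorProd q n : ℝ) * x⌋ - k + ⌊(cantorProd q n : ℝ) * y⌋, ?_⟩
  rw [TQ, TQ, ← Int.self_sub_floor, ← Int.self_sub_floor]
  push_cast
  linarith

end CantorSeries

theorem stmt_1_general (q : ℕ → ℕ) (x y : ℝ) (E F : ℕ → ℕ)
    (hE : IsCantorDigits q E x) (hF : IsCantorDigits q F y)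
    (hx : QDistNormal q x)
    (h : Filter.Tendsto
      (fun N : ℕ => (1 / (N : ℝ)) * ∑ n ∈ Finset.Icc 1 N, (|(E n : ℝ) - (F n : ℝ)| + 1) / (q n : ℝ))
      Filter.atTop (nhds 0)) :
    QDistNormal q y := by
  set r : ℕ → ℝ := fun n => cantorProd q n * cantorTail q F n - cantorProd q n * cantorTail q E n
  have hr : ∀ n, |r n| ≤ (|(E (n + 1) : ℝ) - F (n + 1)| + 1) / q (n + 1) :=
    abs_sub_cantorProd_mul_cantorTail_le hE.1 hF.1
  have hcesaro : Tendsto (fun N => (∑ n ∈ range N, |r n|) / N) atTop (𝓝 0) := by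
    refine squeeze_zero (fun N => by positivity) (fun N => ?_) h
    rw [sum_Icc_one_eq_sum_range, one_div_mul_eq_div]
    gcongr with n
    exact hr n
  exact (UDMod1.add_of_density hx fun ε hε =>
    tendsto_card_le_div_of_cesaro (fun n => abs_nonneg (r n)) hcesaro hε).congr_fract
      (fract_TQ_add_sub_eq_fract_TQ hE hF)

theorem stmt_1 (q : ℕ → ℕ) (hq : BasicSeq q) (x y : ℝ) (E F : ℕ → ℕ)
    (hE : IsCantorDigits q E x) (hF : IsCantorDigits q F y)
    (hx : QDistNormal q x)
    (h : Filter.Tendsto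
      (fun N : ℕ => (1 / (N : ℝ)) * ∑ n ∈ Finset.Icc 1 N, (|(E n : ℝ) - (F n : ℝ)| + 1) / (q n : ℝ))
      Filter.atTop (nhds 0)) :
    QDistNormal q y :=
  stmt_1_general q x y E F hE hF hx h
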